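/- The cycletree numbering assigns to the nodes of a tree of size n, starting from counter c, exactly the set of numbers {c, c+1, …, c+n−1}: the multiset of num-labels of the labeled tree produced by any of the four modes (root, pre, in, post) on t with starting counter c equals the multiset {c, …, c + size t − 1}. In particular all assigned numbers are distinct. -/

import Mathlib

/-
Each mode threads the counter through the two subtrees and places the root label first,
between them, or last. By simultaneous induction over the four modes, a mode started at `c`
labels a tree of size `n` with exactly `Ico c (c + n)` and returns `c + n`; the node step is
one of the three splittings of `Ico c (c + a + b + 1)` according to where the root label sits.
-/

namespace Retreet

inductive BTree where
  | nil : BTree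
  | node : BTree → BTree → BTree

inductive LTree where
  | lnil : LTree
  | lnode : Nat → LTree → LTree → LTree

def size : BTree → Nat
  | .nil => 0
  | .node l r => size l + size r + 1

mutual
def rootMode : BTree → Nat → LTree × Nat
  | .nil, c => (.lnil, c)
  | .node l r, c =>
      let (l', c1) := preMode l (c + 1)
      let (r', c2) := postMode r c1
      (.lnode c l' r', c2)
def preMode : BTree → Nat → LTree × Nat
  | .nil, c => (.lnil, c)
  | .node l r, c =>
      let (l', c1) := preMode l (c + 1)
      let (r', c2) := inMode r c1
      (.lnode c l' r', c2)
def inMode : BTree → Nat → LTree × Nat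
  | .nil, c => (.lnil, c)
  | .node l r, c =>
      let (l', c1) := postMode l c
      let (r', c2) := preMode r (c1 + 1)
      (.lnode c1 l' r', c2)
def postMode : BTree → Nat → LTree × Nat
  | .nil, c => (.lnil, c)
  | .node l r, c =>
      let (l', c1) := inMode l c
      let (r', c2) := postMode r c1
      (.lnode c2 l' r', c2 + 1)
end

/-- The multiset of all `num` labels of a labeled tree. -/
def nums : LTree → Multiset Nat
  | .lnil => 0
  | .lnode n l r => n ::ₘ (nums l + nums r)

open Multiset

theorem _root_.Multiset.range_eq_Ico (n : ℕ) : range n = Ico 0 n := by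
  rw [Ico, ← Finset.range_eq_Ico]; rfl

theorem _root_.Multiset.cons_Ico_add_one_left {a b : ℕ} (h : a < b) :
    a ::ₘ Ico (a + 1) b = Ico a b := by
  rw [← Ioo_cons_left h]; rfl

theorem _root_.Multiset.cons_Ico_add_one_right {a b : ℕ} (h : a ≤ b) :
    b ::ₘ Ico a b = Ico a (b + 1) := by
  rw [Ico_cons_right h]; rfl

def NumbersInterval (c n : ℕ) (p : LTree × ℕ) : Prop :=
  nums p.1 = Ico c (c + n) ∧ p.2 = c + n

namespace NumbersInterval

variable {c a b : ℕ} {pl pr : LTree × ℕ}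

theorem nil (c : ℕ) : NumbersInterval c 0 (.lnil, c) := by
  simp [NumbersInterval, nums]

theorem lnode_root_first (hl : NumbersInterval (c + 1) a pl) (hr : NumbersInterval pl.2 b pr) :
    NumbersInterval c (a + b + 1) (.lnode c pl.1 pr.1, pr.2) := by
  obtain ⟨hl, hcl⟩ := hl
  obtain ⟨hr, hcr⟩ := hr
  rw [hcl] at hr hcr
  refine ⟨?_, by omega⟩
  rw [nums, hl, hr, Ico_add_Ico_eq_Ico (by omega) (by omega), cons_Ico_add_one_left (by omega)]
  exact congrArg (Ico c) (by omega)

theorem lnode_root_between (hl : NumbersInterval c a pl)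
    (hr : NumbersInterval (pl.2 + 1) b pr) :
    NumbersInterval c (a + b + 1) (.lnode pl.2 pl.1 pr.1, pr.2) := by
  obtain ⟨hl, hcl⟩ := hl
  obtain ⟨hr, hcr⟩ := hr
  rw [hcl] at hr hcr ⊢
  refine ⟨?_, by omega⟩
  rw [nums, hl, hr, ← add_cons, cons_Ico_add_one_left (by omega),
    Ico_add_Ico_eq_Ico (by omega) (by omega)]
  exact congrArg (Ico c) (by omega)

theorem lnode_root_last (hl : NumbersInterval c a pl) (hr : NumbersInterval pl.2 b pr) :
    NumbersInterval c (a + b + 1) (.lnode pr.2 pl.1 pr.1, pr.2 + 1) := by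
  obtain ⟨hl, hcl⟩ := hl
  obtain ⟨hr, hcr⟩ := hr
  rw [hcl] at hr hcr
  refine ⟨?_, by omega⟩
  rw [nums, hl, hr, hcr, Ico_add_Ico_eq_Ico (by omega) (by omega),
    cons_Ico_add_one_right (by omega)]
  exact congrArg (Ico c) (by omega)

end NumbersInterval

theorem numbersInterval_modes (t : BTree) (c : ℕ) :
    NumbersInterval c (size t) (rootMode t c) ∧ NumbersInterval c (size t) (preMode t c) ∧
    NumbersInterval c (size t) (inMode t c) ∧ NumbersInterval c (size t) (postMode t c) := by
  induction t generalizing c with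
  | nil => exact ⟨.nil c, .nil c, .nil c, .nil c⟩
  | node l r ihl ihr =>
    exact ⟨.lnode_root_first (ihl _).2.1 (ihr _).2.2.2,
      .lnode_root_first (ihl _).2.1 (ihr _).2.2.1,
      .lnode_root_between (ihl _).2.2.2 (ihr _).2.1,
      .lnode_root_last (ihl _).2.2.1 (ihr _).2.2.2⟩

theorem modes_assign_contiguous_interval (t : BTree) (c : Nat) :
    nums (rootMode t c).1 = (Multiset.range (size t)).map (fun i => c + i) ∧
    nums (preMode t c).1 = (Multiset.range (size t)).map (fun i => c + i) ∧
    nums (inMode t c).1 = (Multiset.range (size t)).map (fun i => c + i) ∧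
    nums (postMode t c).1 = (Multiset.range (size t)).map (fun i => c + i) := by
  rw [range_eq_Ico, map_add_left_Ico, add_zero]
  obtain ⟨⟨hroot, -⟩, ⟨hpre, -⟩, ⟨hin, -⟩, ⟨hpost, -⟩⟩ := numbersInterval_modes t c
  exact ⟨hroot, hpre, hin, hpost⟩

end Retreet
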